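/- For every real p with 1/2 ≤ p ≤ 1 and every positive integer n, one has s_n(p) = s_{n-1}(p)·(1 − p^n) − min(0, s_{n-1}(p))·n·p^{n-1}·(1−p) + p^n·(1−p) − (1−p)^n. -/
import Mathlib


/-- `v p n` is the optimal expected number of heads in the coin game with `n` coins,
each landing heads with probability `p`. -/
noncomputable def v (p : ℝ) : ℕ → ℝ
  | 0 => 0
  | n + 1 =>
      ((n : ℝ) + 1) * p ^ (n + 1) + v p n * (1 - p) ^ (n + 1) +
        ∑ j ∈ (Finset.Icc 1 n).attach,
          (((n + 1).choose j.1 : ℕ) : ℝ) * p ^ (j.1 : ℕ) * (1 - p) ^ (n + 1 - j.1) *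
            ((Finset.Icc 1 j.1).attach.sup'
              (Finset.attach_nonempty_iff.mpr
                (Finset.nonempty_Icc.mpr (Finset.mem_Icc.mp j.2).1))
              (fun i => v p (n + 1 - i.1) + (i.1 : ℝ)))
decreasing_by
  · omega
  · have h := (Finset.mem_Icc.mp i.2).1
    omega

/-- `s p n = v p n - n + 1 - p`. -/
noncomputable def s (p : ℝ) (n : ℕ) : ℝ := v p n - n + 1 - p

noncomputable def Aa (p : ℝ) (m : ℕ) : ℝ := p^m*(1-p) - (1-p)^m
noncomputable def Dd (p : ℝ) (m : ℕ) : ℝ := p^m + m*p^(m-1)*(1-p)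
noncomputable def xsF (p : ℝ) (m : ℕ) : ℝ :=
  if 0 ≤ Aa p m then Aa p m / p^m else Aa p m / Dd p m
noncomputable def Hh (p : ℝ) (m : ℕ) (x : ℝ) : ℝ :=
  x * (1 - p ^ m) - min 0 x * (m : ℝ) * p ^ (m - 1) * (1 - p) + p ^ m * (1 - p) - (1 - p) ^ m

set_option linter.unusedVariables false

lemma Dpos {p : ℝ} (hp1 : 1/2 ≤ p) (hp2 : p ≤ 1) (m : ℕ) : 0 < Dd p m := by
  have hp0 : 0 < p := by linarith
  have h1 : 0 < p ^ m := pow_pos hp0 m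
  have h2 : 0 ≤ (m:ℝ) * p^(m-1) * (1-p) :=
    mul_nonneg (mul_nonneg (Nat.cast_nonneg m) (pow_nonneg hp0.le _)) (by linarith)
  unfold Dd; linarith
lemma Dle1 {p : ℝ} (hp1 : 1/2 ≤ p) (hp2 : p ≤ 1) (m : ℕ) (hm : 1 ≤ m) : Dd p m ≤ 1 := by
  obtain ⟨k, rfl⟩ : ∃ k, m = k + 1 := ⟨m - 1, by omega⟩
  have hp0 : (0:ℝ) < p := by linarith
  unfold Dd
  simp only [Nat.add_sub_cancel]
  clear hm
  induction k with
  | zero => push_cast; nlinarith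
  | succ k ih =>
    have h1 : p ^ (k+1) ≤ 1 := pow_le_one₀ hp0.le hp2
    have h2 : 0 ≤ p ^ k := pow_nonneg hp0.le k
    have hq : (0:ℝ) ≤ 1 - p := by linarith
    push_cast
    push_cast at ih
    have e1 : p ^ (k+1+1) + ((k:ℝ)+1) * p ^ (k+1) * (1-p) ≤ p := by
      calc p ^ (k+1+1) + ((k:ℝ)+1) * p ^ (k+1) * (1-p)
          = p * (p ^ (k+1) + ((k:ℝ)+1) * p ^ k * (1-p)) := by ring
        _ ≤ p * 1 := mul_le_mul_of_nonneg_left ih hp0.le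
        _ = p := mul_one p
    have e2 : p ^ (k+1) * (1-p) ≤ 1 - p := by
      calc p ^ (k+1) * (1-p) ≤ 1 * (1-p) := mul_le_mul_of_nonneg_right h1 hq
        _ = 1 - p := one_mul _
    nlinarith [e1, e2]
lemma Hfix {p : ℝ} (hp1 : 1/2 ≤ p) (hp2 : p ≤ 1) (m : ℕ) (hm : 1 ≤ m) :
    Hh p m (xsF p m) = xsF p m := by
  have hp0 : (0:ℝ) < p := by linarith
  have hpm : (0:ℝ) < p ^ m := pow_pos hp0 m
  have hD := Dpos hp1 hp2 m
  have hmm : m - 1 + 1 = m := by omega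
  unfold xsF
  split_ifs with h
  · have hx0 : 0 ≤ Aa p m / p ^ m := div_nonneg h hpm.le
    have hmin : min 0 (Aa p m / p ^ m) = 0 := min_eq_left hx0
    have hc : Aa p m / p ^ m * p ^ m = Aa p m := div_mul_cancel₀ _ (ne_of_gt hpm)
    unfold Hh
    rw [hmin]
    unfold Aa at *
    linarith
  · push_neg at h
    have hx0 : Aa p m / Dd p m < 0 := div_neg_of_neg_of_pos h hD
    have hmin : min 0 (Aa p m / Dd p m) = Aa p m / Dd p m := min_eq_right hx0.le
    have hc : Aa p m / Dd p m * Dd p m = Aa p m := div_mul_cancel₀ _ (ne_of_gt hD)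
    unfold Hh
    rw [hmin]
    unfold Aa Dd at *
    linear_combination (-1 : ℝ) * hc
lemma Hmono {p : ℝ} (hp1 : 1/2 ≤ p) (hp2 : p ≤ 1) (m : ℕ) (hm : 1 ≤ m) {x y : ℝ}
    (hxy : x ≤ y) : Hh p m x ≤ Hh p m y := by
  have hp0 : (0:ℝ) < p := by linarith
  have hD := Dle1 hp1 hp2 m hm
  have hc : 0 ≤ (m:ℝ) * p^(m-1) * (1-p) :=
    mul_nonneg (mul_nonneg (Nat.cast_nonneg m) (pow_nonneg hp0.le _)) (by linarith)
  have h1 : min 0 x ≤ min 0 y := min_le_min (le_refl 0) hxy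
  have h2 : min 0 y - min 0 x ≤ y - x := by
    rcases le_total 0 x with hx0 | hx0 <;> rcases le_total 0 y with hy0 | hy0 <;>
      simp [min_eq_left, min_eq_right, hx0, hy0] <;> linarith
  have h3 : (m:ℝ) * p^(m-1) * (1-p) ≤ 1 - p ^ m := by unfold Dd at hD; linarith
  have h4 : 0 ≤ y - x := by linarith
  unfold Hh
  nlinarith [mul_le_mul_of_nonneg_right h2 hc, mul_le_mul_of_nonneg_left h3 h4]
lemma Hstep {p : ℝ} (hp1 : 1/2 ≤ p) (hp2 : p ≤ 1) (m : ℕ) (hm : 1 ≤ m) {x : ℝ}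
    (hx : x ≤ xsF p m) : x ≤ Hh p m x := by
  have hp0 : (0:ℝ) < p := by linarith
  have hpm : (0:ℝ) < p ^ m := pow_pos hp0 m
  have hD := Dpos hp1 hp2 m
  unfold xsF at hx
  split_ifs at hx with h
  · rcases le_total 0 x with hx0 | hx0
    · have hmin : min 0 x = 0 := min_eq_left hx0
      have hle : x * p ^ m ≤ Aa p m := (le_div_iff₀ hpm).mp hx
      unfold Hh; rw [hmin]; unfold Aa at hle; nlinarith
    · have hmin : min 0 x = x := min_eq_right hx0
      have h5 : 0 ≤ -x * Dd p m := mul_nonneg (by linarith) hD.le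
      unfold Hh; rw [hmin]; unfold Aa at h; unfold Dd at h5; nlinarith
  · push_neg at h
    have hle : x * Dd p m ≤ Aa p m := (le_div_iff₀ hD).mp hx
    have hx0 : x ≤ 0 := le_trans hx (div_nonpos_of_nonpos_of_nonneg h.le hD.le)
    have hmin : min 0 x = x := min_eq_right hx0
    unfold Hh; rw [hmin]; unfold Aa Dd at *; nlinarith
lemma xs_mono {p : ℝ} (hp1 : 1/2 ≤ p) (hp2 : p ≤ 1) (m : ℕ) (hm : 1 ≤ m) :
    xsF p m ≤ xsF p (m+1) := by
  obtain ⟨k, rfl⟩ : ∃ k, m = k + 1 := ⟨m - 1, by omega⟩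
  have hp0 : (0:ℝ) < p := by linarith
  have hq : (0:ℝ) ≤ 1 - p := by linarith
  have hqp : (0:ℝ) ≤ p - (1 - p) := by linarith
  have hD1 := Dpos hp1 hp2 (k+1)
  have hD2 := Dpos hp1 hp2 (k+2)
  have hP1 : (0:ℝ) < p ^ (k+1) := pow_pos hp0 _
  have hP2 : (0:ℝ) < p ^ (k+2) := pow_pos hp0 _
  have hx : (0:ℝ) ≤ p ^ k := pow_nonneg hp0.le k
  have hy : (0:ℝ) ≤ (1-p) ^ k := pow_nonneg hq k
  unfold xsF
  rw [show k + 1 + 1 = k + 2 from rfl]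
  split_ifs with h1 h2 h2
  · rw [div_le_div_iff₀ hP1 hP2]
    unfold Aa
    simp only [pow_succ] at *
    nlinarith [mul_nonneg (mul_nonneg (mul_nonneg (mul_nonneg hx hy) hp0.le) hq) hqp]
  · exfalso
    push_neg at h2
    unfold Aa at h1 h2
    simp only [pow_succ] at h1 h2
    nlinarith [mul_le_mul_of_nonneg_left (sub_nonneg.mpr h1) hp0.le,
      mul_nonneg (mul_nonneg hy hq) hqp]
  · have l1 : Aa p (k+1) / Dd p (k+1) ≤ 0 := by
      push_neg at h1
      exact (div_nonpos_of_nonpos_of_nonneg h1.le hD1.le)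
    have l2 : 0 ≤ Aa p (k+2) / p ^ (k+2) := div_nonneg h2 hP2.le
    linarith
  · push_neg at h1 h2
    rw [div_le_div_iff₀ hD1 hD2]
    unfold Aa Dd at *
    simp only [Nat.add_sub_cancel, Nat.cast_add, Nat.cast_one, Nat.cast_ofNat,
      show k + 2 - 1 = k + 1 from rfl, pow_succ] at *
    have hsq : (1-p)*(1-p) ≤ p*p := by nlinarith
    have key : (p^k*p*p)*((1-p)*(1-p)) ≤
        ((1-p)^k*(1-p)) * (p*p + ((k:ℝ)+1)*(1-p)*(p-(1-p))) := by
      nlinarith [mul_le_mul_of_nonneg_right h2.le hq,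
        mul_le_mul_of_nonneg_left hsq (mul_nonneg hy hq),
        mul_nonneg (mul_nonneg hy hq)
          (mul_nonneg (mul_nonneg (by positivity : (0:ℝ) ≤ (k:ℝ)+1) hq) hqp)]
    nlinarith [mul_le_mul_of_nonneg_left key hx]
lemma sup'_attach_eq (t : Finset ℕ) (ht : t.attach.Nonempty) (f : ℕ → ℝ) (c : ℝ)
    (h1 : ∀ i ∈ t, f i ≤ c) (h2 : ∃ i ∈ t, c ≤ f i) :
    t.attach.sup' ht (fun i => f i.1) = c := by
  apply le_antisymm
  · exact Finset.sup'_le _ _ fun i _ => h1 i.1 i.2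
  · obtain ⟨i, hi, hci⟩ := h2
    exact hci.trans (Finset.le_sup' (fun i : {x // x ∈ t} => f i.1) (Finset.mem_attach t ⟨i, hi⟩))
lemma v_succ_eval (p : ℝ) (N : ℕ) (c : ℕ → ℝ)
    (hc : ∀ j (hj : j ∈ Finset.Icc 1 N),
      ((Finset.Icc 1 j).attach.sup'
        (Finset.attach_nonempty_iff.mpr
          (Finset.nonempty_Icc.mpr (Finset.mem_Icc.mp hj).1))
        (fun i => v p (N + 1 - i.1) + (i.1 : ℝ))) = c j) :
    v p (N + 1) = ((N : ℝ) + 1) * p ^ (N + 1) + v p N * (1 - p) ^ (N + 1) +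
      ∑ j ∈ Finset.Icc 1 N,
        (((N + 1).choose j : ℕ) : ℝ) * p ^ j * (1 - p) ^ (N + 1 - j) * c j := by
  rw [v]
  congr 1
  rw [← Finset.sum_attach (Finset.Icc 1 N)
    (fun j => (((N + 1).choose j : ℕ) : ℝ) * p ^ j * (1 - p) ^ (N + 1 - j) * c j)]
  exact Finset.sum_congr rfl fun j _ => by rw [hc j.1 j.2]
lemma v_one (p : ℝ) : v p 1 = p := by
  have hc : ∀ j (hj : j ∈ Finset.Icc 1 0),
      ((Finset.Icc 1 j).attach.sup'
        (Finset.attach_nonempty_iff.mpr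
          (Finset.nonempty_Icc.mpr (Finset.mem_Icc.mp hj).1))
        (fun i => v p (0 + 1 - i.1) + (i.1 : ℝ))) = 0 := by
    intro j hj
    exact absurd hj (by simp)
  rw [v_succ_eval p 0 (fun _ => 0) hc]
  simp [show v p 0 = 0 from by rw [v]]
lemma v_two (p : ℝ) : v p 2 = 3 * p - p ^ 3 := by
  have hc : ∀ j (hj : j ∈ Finset.Icc 1 1),
      ((Finset.Icc 1 j).attach.sup'
        (Finset.attach_nonempty_iff.mpr
          (Finset.nonempty_Icc.mpr (Finset.mem_Icc.mp hj).1))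
        (fun i => v p (1 + 1 - i.1) + (i.1 : ℝ))) = p + 1 := by
    intro j hj
    have hj1 : j = 1 := by
      have := Finset.mem_Icc.mp hj; omega
    subst hj1
    apply sup'_attach_eq (Finset.Icc 1 1) _ (fun i => v p (1 + 1 - i) + (i : ℝ)) (p + 1)
    · intro i hi
      have hi1 : i = 1 := by have := Finset.mem_Icc.mp hi; omega
      subst hi1
      simp [v_one]
    · exact ⟨1, by simp, by simp [v_one]⟩
  rw [v_succ_eval p 1 (fun _ => p + 1) hc]
  simp [v_one]
  ring
lemma binom_sum (p : ℝ) (N : ℕ) (hN : 1 ≤ N) :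
    ∑ j ∈ Finset.Icc 1 N, (((N + 1).choose j : ℕ) : ℝ) * p ^ j * (1 - p) ^ (N + 1 - j)
      = 1 - p ^ (N + 1) - (1 - p) ^ (N + 1) := by
  have hpow := add_pow p (1 - p) (N + 1)
  rw [show p + (1 - p) = 1 by ring, one_pow] at hpow
  have hr : Finset.range (N + 2) = insert 0 (insert (N + 1) (Finset.Icc 1 N)) := by
    ext x
    simp only [Finset.mem_range, Finset.mem_insert, Finset.mem_Icc]
    omega
  rw [hr, Finset.sum_insert (by simp only [Finset.mem_insert, Finset.mem_Icc]; omega),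
      Finset.sum_insert (by simp only [Finset.mem_Icc]; omega)] at hpow
  simp only [pow_zero, one_mul, Nat.sub_zero, Nat.choose_zero_right, Nat.cast_one, mul_one,
    Nat.sub_self, Nat.choose_self] at hpow
  have e : ∑ j ∈ Finset.Icc 1 N, (((N + 1).choose j : ℕ) : ℝ) * p ^ j * (1 - p) ^ (N + 1 - j)
      = ∑ j ∈ Finset.Icc 1 N, p ^ j * (1 - p) ^ (N + 1 - j) * (((N + 1).choose j : ℕ) : ℝ) :=
    Finset.sum_congr rfl fun j _ => by ring
  rw [e]
  linarith
lemma formula_big (p : ℝ) (hp1 : 1/2 ≤ p) (hp2 : p ≤ 1) (N : ℕ) (hN : 2 ≤ N)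
    (chain : ∀ m, 2 ≤ m → m ≤ N → s p m ≤ s p N) :
    s p (N + 1) = Hh p (N + 1) (s p N) := by
  set T := max 0 (-(s p N)) with hT
  have hc : ∀ j (hj : j ∈ Finset.Icc 1 N),
      ((Finset.Icc 1 j).attach.sup'
        (Finset.attach_nonempty_iff.mpr
          (Finset.nonempty_Icc.mpr (Finset.mem_Icc.mp hj).1))
        (fun i => v p (N + 1 - i.1) + (i.1 : ℝ))) =
      v p N + 1 + (if j = N then T else 0) := by
    intro j hj
    obtain ⟨hj1, hjN⟩ := Finset.mem_Icc.mp hj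
    apply sup'_attach_eq (Finset.Icc 1 j) _ (fun i => v p (N + 1 - i) + (i : ℝ)) _
    · intro i hi
      obtain ⟨hi1, hij⟩ := Finset.mem_Icc.mp hi
      have hif : 0 ≤ (if j = N then T else 0) := by
        split_ifs
        · exact le_max_left _ _
        · exact le_refl 0
      by_cases hiN : i = N
      · have hjN' : j = N := by omega
        rw [hiN, if_pos hjN', show N + 1 - N = 1 by omega, v_one]
        have h2 : -(s p N) ≤ T := le_max_right _ _
        unfold s at h2
        linarith
      · have h4 := chain (N + 1 - i) (by omega) (by omega)
        unfold s at h4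
        have hcast : ((N + 1 - i : ℕ) : ℝ) = (N : ℝ) + 1 - (i : ℝ) := by
          have : (i : ℕ) ≤ N + 1 := by omega
          push_cast [Nat.cast_sub this]
          ring
        rw [hcast] at h4
        linarith
    · by_cases hjN' : j = N
      · rcases le_total (s p N) 0 with hs0 | hs0
        · refine ⟨N, Finset.mem_Icc.mpr ⟨by omega, by omega⟩, ?_⟩
          rw [if_pos hjN', show N + 1 - N = 1 by omega, v_one,
            show T = -(s p N) from max_eq_right (by linarith)]
          unfold s
          linarith
        · refine ⟨1, Finset.mem_Icc.mpr ⟨le_refl 1, by omega⟩, ?_⟩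
          rw [if_pos hjN', show T = 0 from max_eq_left (by linarith),
            show N + 1 - 1 = N by omega]
          push_cast
          linarith
      · refine ⟨1, Finset.mem_Icc.mpr ⟨le_refl 1, by omega⟩, ?_⟩
        rw [if_neg hjN', show N + 1 - 1 = N by omega]
        push_cast
        linarith
  have hv := v_succ_eval p N (fun j => v p N + 1 + (if j = N then T else 0)) hc
  have hite : ∑ j ∈ Finset.Icc 1 N,
      (((N + 1).choose j : ℕ) : ℝ) * p ^ j * (1 - p) ^ (N + 1 - j) * (if j = N then T else 0)
      = ((N : ℝ) + 1) * p ^ N * (1 - p) * T := by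
    have e : ∀ j ∈ Finset.Icc 1 N,
        (((N + 1).choose j : ℕ) : ℝ) * p ^ j * (1 - p) ^ (N + 1 - j) * (if j = N then T else 0)
        = if j = N then (((N + 1).choose j : ℕ) : ℝ) * p ^ j * (1 - p) ^ (N + 1 - j) * T
          else 0 := by
      intro j _
      rw [mul_ite, mul_zero]
    rw [Finset.sum_congr rfl e, Finset.sum_ite_eq' (Finset.Icc 1 N) N,
      if_pos (Finset.mem_Icc.mpr ⟨by omega, le_refl N⟩),
      Nat.choose_succ_self_right, show N + 1 - N = 1 by omega, pow_one]
    push_cast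
    ring
  have hsum : ∑ j ∈ Finset.Icc 1 N,
      (((N + 1).choose j : ℕ) : ℝ) * p ^ j * (1 - p) ^ (N + 1 - j)
        * (v p N + 1 + (if j = N then T else 0))
      = (v p N + 1) * (1 - p ^ (N + 1) - (1 - p) ^ (N + 1))
        + ((N : ℝ) + 1) * p ^ N * (1 - p) * T := by
    have e : ∀ j ∈ Finset.Icc 1 N,
        (((N + 1).choose j : ℕ) : ℝ) * p ^ j * (1 - p) ^ (N + 1 - j)
          * (v p N + 1 + (if j = N then T else 0))
        = (((N + 1).choose j : ℕ) : ℝ) * p ^ j * (1 - p) ^ (N + 1 - j) * (v p N + 1)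
          + (((N + 1).choose j : ℕ) : ℝ) * p ^ j * (1 - p) ^ (N + 1 - j)
            * (if j = N then T else 0) := fun j _ => by ring
    rw [Finset.sum_congr rfl e, Finset.sum_add_distrib, ← Finset.sum_mul,
      binom_sum p N (by omega), hite]
    ring
  have hTm : T = -(min 0 (s p N)) := by
    rcases le_total (s p N) 0 with h | h
    · rw [hT, max_eq_right (by linarith), min_eq_right h]
    · rw [hT, max_eq_left (by linarith), min_eq_left h]
      ring
  have hsv : s p N = v p N - (N : ℝ) + 1 - p := rfl
  have hsN1 : s p (N + 1) = v p (N + 1) - ((N : ℝ) + 1) + 1 - p := by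
    unfold s
    push_cast
    ring
  rw [hsN1, hv]
  beta_reduce
  rw [hsum, hTm]
  unfold Hh
  rw [hsv]
  simp only [Nat.add_sub_cancel]
  push_cast
  ring

lemma v_zero (p : ℝ) : v p 0 = 0 := by rw [v]

lemma formula_one (p : ℝ) (hp1 : 1/2 ≤ p) (hp2 : p ≤ 1) :
    s p 1 = Hh p 1 (s p 0) := by
  have h1 : s p 1 = 0 := by unfold s; rw [v_one]; push_cast; ring
  have h0 : s p 0 = 1 - p := by unfold s; rw [v_zero]; push_cast; ring
  rw [h1, h0]
  unfold Hh
  rw [min_eq_left (show (0:ℝ) ≤ 1 - p by linarith)]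
  norm_num
  ring

lemma formula_two (p : ℝ) (hp1 : 1/2 ≤ p) (hp2 : p ≤ 1) :
    s p 2 = Hh p 2 (s p 1) := by
  have h1 : s p 1 = 0 := by unfold s; rw [v_one]; push_cast; ring
  have h2 : s p 2 = 2*p - p^3 - 1 := by unfold s; rw [v_two]; push_cast; ring
  rw [h1, h2]
  unfold Hh
  rw [min_self]
  norm_num
  ring

lemma base2 (p : ℝ) (hp1 : 1/2 ≤ p) (hp2 : p ≤ 1) : s p 2 ≤ xsF p 3 := by
  have hp0 : (0:ℝ) < p := by linarith
  have hq : (0:ℝ) ≤ 1 - p := by linarith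
  have hs2 : s p 2 = 2*p - p^3 - 1 := by unfold s; rw [v_two]; push_cast; ring
  have hp3 : (0:ℝ) < p^3 := by positivity
  unfold xsF Aa Dd
  simp only [show (3:ℕ) - 1 = 2 from rfl, Nat.cast_ofNat]
  split_ifs with h
  · rcases le_total (p^2 + p - 1) 0 with hg | hg
    · have l1 : s p 2 ≤ 0 := by rw [hs2]; nlinarith
      have l2 : 0 ≤ (p^3*(1-p) - (1-p)^3) / p^3 := div_nonneg h hp3.le
      linarith
    · rw [hs2, le_div_iff₀ hp3]
      have hX : 0 ≤ p^4 + 2*p^3 + p - 1 := by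
        nlinarith [mul_nonneg (sq_nonneg p) hg, hp3.le]
      nlinarith [mul_nonneg (mul_nonneg hq hq) hX]
  · have hD3 : (0:ℝ) < p^3 + 3*p^2*(1-p) := by nlinarith [sq_nonneg p]
    rw [hs2, le_div_iff₀ hD3]
    nlinarith [mul_nonneg (mul_nonneg (show (0:ℝ) ≤ 2*p - 1 by linarith)
      (mul_nonneg (mul_nonneg hq hq) hq)) (sq_nonneg (p+1))]

lemma main_ind (p : ℝ) (hp1 : 1/2 ≤ p) (hp2 : p ≤ 1) : ∀ n : ℕ,
    (1 ≤ n → s p n = Hh p n (s p (n - 1))) ∧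
    (2 ≤ n → s p n ≤ xsF p (n + 1)) ∧
    (3 ≤ n → s p (n - 1) ≤ s p n) := by
  intro n
  induction n using Nat.strong_induction_on with
  | _ n IH =>
    match n with
    | 0 =>
      exact ⟨fun h => absurd h (by omega), fun h => absurd h (by omega),
        fun h => absurd h (by omega)⟩
    | 1 =>
      exact ⟨fun _ => formula_one p hp1 hp2, fun h => absurd h (by omega),
        fun h => absurd h (by omega)⟩
    | 2 =>
      exact ⟨fun _ => formula_two p hp1 hp2, fun _ => base2 p hp1 hp2,
        fun h => absurd h (by omega)⟩
    | (m + 3) =>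
      have chain : ∀ d mm, 2 ≤ mm → mm + d ≤ m + 2 → s p mm ≤ s p (mm + d) := by
        intro d
        induction d with
        | zero => exact fun mm _ _ => le_refl _
        | succ d ihd =>
          intro mm h2 hle
          have t1 := ihd mm h2 (by omega)
          have t2 : s p (mm + d) ≤ s p (mm + d + 1) := by
            have := (IH (mm + d + 1) (by omega)).2.2 (by omega)
            simpa using this
          calc s p mm ≤ s p (mm + d) := t1
            _ ≤ s p (mm + d + 1) := t2
      have F : s p (m + 3) = Hh p (m + 3) (s p (m + 2)) := by
        apply formula_big p hp1 hp2 (m + 2) (by omega)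
        intro mm h2 hmm
        have t := chain (m + 2 - mm) mm h2 (by omega)
        have e : mm + (m + 2 - mm) = m + 2 := by omega
        rw [e] at t
        exact t
      have hprev : s p (m + 2) ≤ xsF p (m + 3) := (IH (m + 2) (by omega)).2.1 (by omega)
      have Q : s p (m + 3) ≤ xsF p (m + 4) := by
        calc s p (m + 3) = Hh p (m + 3) (s p (m + 2)) := F
          _ ≤ Hh p (m + 3) (xsF p (m + 3)) := Hmono hp1 hp2 (m + 3) (by omega) hprev
          _ = xsF p (m + 3) := Hfix hp1 hp2 (m + 3) (by omega)
          _ ≤ xsF p (m + 4) := xs_mono hp1 hp2 (m + 3) (by omega)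
      have M : s p (m + 2) ≤ s p (m + 3) := by
        rw [F]
        exact Hstep hp1 hp2 (m + 3) (by omega) hprev
      exact ⟨fun _ => F, fun _ => Q, fun _ => M⟩

theorem coin_game_s_recursion (p : ℝ) (hp1 : 1 / 2 ≤ p) (hp2 : p ≤ 1)
    (n : ℕ) (hn : 1 ≤ n) :
    s p n = s p (n - 1) * (1 - p ^ n) -
      min 0 (s p (n - 1)) * (n : ℝ) * p ^ (n - 1) * (1 - p) +
      p ^ n * (1 - p) - (1 - p) ^ n := by
  have h := (main_ind p hp1 hp2 n).1 hn
  unfold Hh at h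
  exact h
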